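/- arXiv:1710.08584 — 3 statements merged into one kernel-verified Lean document; each statement's English description precedes it below -/
import Mathlib

section
/- Let a, c be pure quaternions that are not ℝ-linearly dependent, and let b, d be pure quaternions with ‖a‖ = ‖b‖ ≠ 0 and ‖c‖ = ‖d‖ ≠ 0. Then there exists an ℝ-algebra homomorphism φ : ℍ → ℍ with φ(a) = b and φ(c) = d if and only if ⟨a,c⟩ = ⟨b,d⟩. (This is the coplanarity criterion, Lemma 4.1 of the paper, in the case k = ℝ, 𝔸 = 𝔹 = ℍ: the lines [a,b] and [c,d] of the geometry are coplanar if and only if ⟨a,c⟩ = ⟨b,d⟩.) -/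
open Quaternion
open scoped RealInnerProductSpace

lemma pure_anticomm (x y : ℍ[ℝ]) (hx : x.re = 0) (hy : y.re = 0) :
    x * y + y * x = ((-(2 * ⟪x, y⟫) : ℝ) : ℍ[ℝ]) := by
  ext <;>
    simp [Quaternion.inner_def, Quaternion.re_mul, Quaternion.imI_mul, Quaternion.imJ_mul,
      Quaternion.imK_mul, hx, hy] <;> ring

lemma pure_sq (x : ℍ[ℝ]) (hx : x.re = 0) :
    x * x = ((-(‖x‖ * ‖x‖) : ℝ) : ℍ[ℝ]) := by
  have hs : star x = -x := Quaternion.star_eq_neg.mpr hx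
  have h := Quaternion.self_mul_star (a := x)
  rw [hs, mul_neg, Quaternion.normSq_eq_norm_mul_self] at h
  rw [Quaternion.coe_neg, ← h, neg_neg]

/-- Build a quaternionic basis from two orthonormal pure quaternions. -/
noncomputable def pureBasis (x y : ℍ[ℝ]) (hx : x.re = 0) (hy : y.re = 0) (hnx : ‖x‖ = 1) (hny : ‖y‖ = 1)
    (hxy : ⟪x, y⟫ = 0) : QuaternionAlgebra.Basis ℍ[ℝ] (-1 : ℝ) (0 : ℝ) (-1 : ℝ) where
  i := x
  j := y
  k := x * y
  i_mul_i := by rw [pure_sq x hx, hnx]; ext <;> simp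
  j_mul_j := by rw [pure_sq y hy, hny]; ext <;> simp
  i_mul_j := rfl
  j_mul_i := by
    have h := pure_anticomm x y hx hy
    rw [hxy] at h
    simp only [mul_zero, neg_zero, Quaternion.coe_zero] at h
    rw [zero_smul, zero_sub]
    linear_combination (norm := noncomm_ring) h

/-- Coplanarity criterion (Lemma 4.1 of the paper, case `k = ℝ`, `𝔸 = 𝔹 = ℍ`):
for pure quaternions `a, c` not ℝ-linearly dependent and pure quaternions
`b, d` with `‖a‖ = ‖b‖ ≠ 0` and `‖c‖ = ‖d‖ ≠ 0`, there is an ℝ-algebra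
homomorphism `φ : ℍ → ℍ` with `φ a = b` and `φ c = d` if and only if
`⟪a, c⟫ = ⟪b, d⟫`. -/
theorem coplanarity_criterion (a c b d : ℍ[ℝ])
    (ha : a.re = 0) (hc : c.re = 0) (hb : b.re = 0) (hd : d.re = 0)
    (hindep : ¬ ∃ r : ℝ, c = r • a)
    (hab : ‖a‖ = ‖b‖) (hane : ‖a‖ ≠ 0)
    (hcd : ‖c‖ = ‖d‖) (hcne : ‖c‖ ≠ 0) :
    (∃ φ : ℍ[ℝ] →ₐ[ℝ] ℍ[ℝ], φ a = b ∧ φ c = d) ↔ ⟪a, c⟫ = ⟪b, d⟫ := by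
  constructor
  · rintro ⟨φ, h1, h2⟩
    have key := congrArg φ (pure_anticomm a c ha hc)
    rw [map_add, map_mul, map_mul, h1, h2, ← Quaternion.algebraMap_def, AlgHom.commutes,
      Quaternion.algebraMap_def, pure_anticomm b d hb hd] at key
    have := Quaternion.coe_injective key
    linarith
  · intro hk
    set r : ℝ := ⟪a, c⟫ / (‖a‖ * ‖a‖) with hr
    set u : ℍ[ℝ] := c - r • a with hudef
    set v : ℍ[ℝ] := d - r • b with hvdef
    have hu0 : u ≠ 0 := by
      intro h
      exact hindep ⟨r, by rw [hudef, sub_eq_zero] at h; exact h⟩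
    have hau : ⟪a, u⟫ = 0 := by
      rw [hudef, inner_sub_right, real_inner_smul_right, real_inner_self_eq_norm_mul_norm, hr]
      field_simp
      ring
    have hbv : ⟪b, v⟫ = 0 := by
      rw [hvdef, inner_sub_right, real_inner_smul_right, real_inner_self_eq_norm_mul_norm, hr,
        ← hab, hk]
      field_simp
      ring
    have hcu : c = r • a + u := by rw [hudef]; abel
    have hdv : d = r • b + v := by rw [hvdef]; abel
    have hnormc : ‖c‖ ^ 2 = ‖r • a‖ ^ 2 + 2 * (r * ⟪a, u⟫) + ‖u‖ ^ 2 := by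
      rw [hcu, norm_add_sq_real, real_inner_smul_left]
    have hnormd : ‖d‖ ^ 2 = ‖r • b‖ ^ 2 + 2 * (r * ⟪b, v⟫) + ‖v‖ ^ 2 := by
      rw [hdv, norm_add_sq_real, real_inner_smul_left]
    have hra : ‖r • a‖ = ‖r • b‖ := by rw [norm_smul, norm_smul, hab]
    have huv : ‖u‖ = ‖v‖ := by
      rw [hau, mul_zero, mul_zero] at hnormc
      rw [hbv, mul_zero, mul_zero] at hnormd
      have : ‖u‖ ^ 2 = ‖v‖ ^ 2 := by
        rw [hcd] at hnormc
        rw [hnormd, hra] at hnormc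
        linarith
      exact (sq_eq_sq₀ (norm_nonneg u) (norm_nonneg v)).mp this
    have hnu : ‖u‖ ≠ 0 := fun h => hu0 (norm_eq_zero.mp h)
    -- orthonormal pairs
    set e₁ : ℍ[ℝ] := ‖a‖⁻¹ • a with he₁
    set e₂ : ℍ[ℝ] := ‖u‖⁻¹ • u with he₂
    set f₁ : ℍ[ℝ] := ‖a‖⁻¹ • b with hf₁
    set f₂ : ℍ[ℝ] := ‖u‖⁻¹ • v with hf₂
    have hure : u.re = 0 := by rw [hudef]; simp [Quaternion.re_sub, Quaternion.re_smul, hc, ha]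
    have hvre : v.re = 0 := by rw [hvdef]; simp [Quaternion.re_sub, Quaternion.re_smul, hd, hb]
    have norm_smul_inv : ∀ (x : ℍ[ℝ]), ‖x‖ ≠ 0 → ‖‖x‖⁻¹ • x‖ = 1 := by
      intro x hx
      rw [norm_smul, norm_inv, norm_norm, inv_mul_cancel₀ hx]
    have hne₁ : ‖e₁‖ = 1 := norm_smul_inv a hane
    have hne₂ : ‖e₂‖ = 1 := norm_smul_inv u hnu
    have hnf₁ : ‖f₁‖ = 1 := by rw [hf₁, hab]; exact norm_smul_inv b (hab ▸ hane)
    have hnf₂ : ‖f₂‖ = 1 := by rw [hf₂, huv]; exact norm_smul_inv v (huv ▸ hnu)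
    have hoe : ⟪e₁, e₂⟫ = 0 := by
      rw [he₁, he₂, real_inner_smul_left, real_inner_smul_right, hau, mul_zero, mul_zero]
    have hof : ⟪f₁, f₂⟫ = 0 := by
      rw [hf₁, hf₂, real_inner_smul_left, real_inner_smul_right, hbv, mul_zero, mul_zero]
    have he₁re : e₁.re = 0 := by rw [he₁]; simp [Quaternion.re_smul, ha]
    have he₂re : e₂.re = 0 := by rw [he₂]; simp [Quaternion.re_smul, hure]
    have hf₁re : f₁.re = 0 := by rw [hf₁]; simp [Quaternion.re_smul, hb]
    have hf₂re : f₂.re = 0 := by rw [hf₂]; simp [Quaternion.re_smul, hvre]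
    let B₁ := pureBasis e₁ e₂ he₁re he₂re hne₁ hne₂ hoe
    let B₂ := pureBasis f₁ f₂ hf₁re hf₂re hnf₁ hnf₂ hof
    let ψ₁ : ℍ[ℝ] →ₐ[ℝ] ℍ[ℝ] := B₁.liftHom
    let ψ₂ : ℍ[ℝ] →ₐ[ℝ] ℍ[ℝ] := B₂.liftHom
    have hinj : Function.Injective ψ₁ := ψ₁.toRingHom.injective
    have hsurj : Function.Surjective ψ₁ :=
      (LinearMap.injective_iff_surjective (f := ψ₁.toLinearMap)).mp hinj
    let ψ : ℍ[ℝ] ≃ₐ[ℝ] ℍ[ℝ] := AlgEquiv.ofBijective ψ₁ ⟨hinj, hsurj⟩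
    have hψ : ∀ x, ψ x = ψ₁ x := fun _ => rfl
    have hlift : ∀ (B : QuaternionAlgebra.Basis ℍ[ℝ] (-1 : ℝ) (0 : ℝ) (-1 : ℝ)) (s t : ℝ),
        B.liftHom (⟨0, s, t, 0⟩ : ℍ[ℝ]) = s • B.i + t • B.j := by
      intro B s t
      show B.lift _ = _
      rw [QuaternionAlgebra.Basis.lift]
      simp
    have hψa : ψ (⟨0, ‖a‖, 0, 0⟩ : ℍ[ℝ]) = a := by
      erw [hψ]
      show B₁.liftHom _ = a
      rw [hlift B₁ ‖a‖ 0, zero_smul, add_zero]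
      show ‖a‖ • e₁ = a
      rw [he₁, smul_smul, mul_inv_cancel₀ hane, one_smul]
    have hψc : ψ (⟨0, r * ‖a‖, ‖u‖, 0⟩ : ℍ[ℝ]) = c := by
      erw [hψ]
      show B₁.liftHom _ = c
      rw [hlift B₁ (r * ‖a‖) ‖u‖]
      show (r * ‖a‖) • e₁ + ‖u‖ • e₂ = c
      rw [he₁, he₂, smul_smul, smul_smul, mul_assoc, mul_inv_cancel₀ hane, mul_one,
        mul_inv_cancel₀ hnu, one_smul, hcu]
    refine ⟨ψ₂.comp ψ.symm.toAlgHom, ?_, ?_⟩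
    · have hsymm : ψ.symm a = ⟨0, ‖a‖, 0, 0⟩ := ψ.symm_apply_eq.mpr hψa.symm
      show ψ₂ (ψ.symm a) = b
      rw [hsymm]
      show B₂.liftHom _ = b
      rw [hlift B₂ ‖a‖ 0, zero_smul, add_zero]
      show ‖a‖ • f₁ = b
      rw [hf₁, smul_smul, mul_inv_cancel₀ hane, one_smul]
    · have hsymm : ψ.symm c = ⟨0, r * ‖a‖, ‖u‖, 0⟩ := ψ.symm_apply_eq.mpr hψc.symm
      show ψ₂ (ψ.symm c) = d
      rw [hsymm]
      show B₂.liftHom _ = d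
      rw [hlift B₂ (r * ‖a‖) ‖u‖]
      show (r * ‖a‖) • f₁ + ‖u‖ • f₂ = d
      rw [hf₁, hf₂, smul_smul, smul_smul, mul_assoc, mul_inv_cancel₀ hane, mul_one,
        mul_inv_cancel₀ hnu, one_smul, hdv]
end

section
/- Identify ℝ⁷ with ℝ³ × ℍ, and consider the quadratic form Q(v,x) = ‖v‖² − ‖x‖² with associated bilinear form B((v,x),(w,y)) = ⟨v,w⟩_{ℝ³} − ⟨x,y⟩_ℍ. Let g be a quaternion of norm 1 acting on ℝ³ × ℍ by (v,x) ↦ (v, g·x) (a left isoclinic rotation of the ℍ-factor). If (v,x) is a nonzero point with Q(v,x) = 0 (so ‖v‖ = ‖x‖ and x ≠ 0) and B((v,x),(v,g·x)) = 0, then g = 1. In other words, no non-identity left isoclinic rotation maps a point of the projective quadric Δ defined by X₀² + X₁² + X₂² − X₃² − X₄² − X₅² − X₆² = 0 to a point of Δ collinear with it on Δ. -/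
open Quaternion
open scoped RealInnerProductSpace

/-- No non-identity left isoclinic rotation maps a point of the projective
quadric `Δ` (given by `X₀² + X₁² + X₂² − X₃² − X₄² − X₅² − X₆² = 0`, with
`ℝ⁷` identified with `ℝ³ × ℍ`) to a collinear point of `Δ`: if `g` is a unit
quaternion, `(v, x) ≠ 0` satisfies `Q(v, x) = ‖v‖² − ‖x‖² = 0` and
`B((v, x), (v, g • x)) = ⟪v, v⟫ − ⟪x, g * x⟫ = 0`, then `g = 1`. -/
theorem left_isoclinic_no_collinear (g : ℍ[ℝ]) (hg : ‖g‖ = 1)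
    (v : EuclideanSpace ℝ (Fin 3)) (x : ℍ[ℝ])
    (hnz : ¬ (v = 0 ∧ x = 0))
    (hQ : ‖v‖ ^ 2 - ‖x‖ ^ 2 = 0)
    (hB : ⟪v, v⟫ - ⟪x, g * x⟫ = 0) :
    g = 1 := by
  have hx : x ≠ 0 := by
    rintro rfl
    simp only [norm_zero] at hQ
    have hv : ‖v‖ = 0 := by nlinarith [norm_nonneg v]
    exact hnz ⟨norm_eq_zero.mp hv, rfl⟩
  have hns : normSq x ≠ 0 := by
    simpa [Quaternion.normSq_eq_zero] using hx
  have h1 : ⟪v, v⟫ = normSq x := by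
    rw [real_inner_self_eq_norm_sq]
    nlinarith [hQ, Quaternion.normSq_eq_norm_mul_self x]
  have h2 : ⟪x, g * x⟫ = normSq x * g.re := by
    rw [Quaternion.inner_def, star_mul, ← mul_assoc, Quaternion.self_mul_star,
      Quaternion.coe_mul_eq_smul]
    simp
  have hre : g.re = 1 := by
    rw [h1, h2] at hB
    have := mul_left_cancel₀ hns (by linarith : normSq x * g.re = normSq x * 1)
    linarith
  have hgn : normSq g = 1 := by
    have := Quaternion.normSq_eq_norm_mul_self g
    rw [hg] at this; simpa using this
  rw [Quaternion.normSq_def'] at hgn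
  ext <;> simp [hre] <;> nlinarith [sq_nonneg g.imI, sq_nonneg g.imJ, sq_nonneg g.imK]
end

section
/- Let l ∈ ℝ and let b, c be pure quaternions of norm 1 with ⟨b,c⟩ = l². Then there exists a pure quaternion d of norm 1 with ⟨b,d⟩ = l and ⟨d,c⟩ = l. (This is the first step in the proof of Lemma 6.6 of the paper, in the case k = ℝ, 𝔹 = ℍ: if inner product l is realized by directed edges, then any pair with inner product l² is joined by a directed path of length two.) -/
open Quaternion
open scoped RealInnerProductSpace

set_option maxHeartbeats 1000000 in
/-- First step in the proof of Lemma 6.6 (case `k = ℝ`, `𝔹 = ℍ`): if `b, c`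
are pure quaternions of norm 1 with `⟪b, c⟫ = l²`, then there is a pure
quaternion `d` of norm 1 with `⟪b, d⟫ = l` and `⟪d, c⟫ = l`. -/
theorem exists_midpoint_of_inner_sq (l : ℝ) (b c : ℍ[ℝ])
    (hb : b.re = 0) (hc : c.re = 0)
    (hnb : ‖b‖ = 1) (hnc : ‖c‖ = 1)
    (hbc : ⟪b, c⟫ = l ^ 2) :
    ∃ d : ℍ[ℝ], d.re = 0 ∧ ‖d‖ = 1 ∧ ⟪b, d⟫ = l ∧ ⟪d, c⟫ = l := by
  have hl : (1 + l ^ 2) ≠ 0 := by positivity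
  have hb2 : b.imI ^ 2 + b.imJ ^ 2 + b.imK ^ 2 = 1 := by
    have h1 : Quaternion.normSq b = 1 := by
      rw [Quaternion.normSq_eq_norm_mul_self, hnb]; ring
    rw [Quaternion.normSq_def', hb] at h1; linarith
  have hc2 : c.imI ^ 2 + c.imJ ^ 2 + c.imK ^ 2 = 1 := by
    have h1 : Quaternion.normSq c = 1 := by
      rw [Quaternion.normSq_eq_norm_mul_self, hnc]; ring
    rw [Quaternion.normSq_def', hc] at h1; linarith
  have hbc2 : b.imI * c.imI + b.imJ * c.imJ + b.imK * c.imK = l ^ 2 := by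
    rw [Quaternion.inner_def] at hbc
    simp [Quaternion.re_mul, hb, hc] at hbc
    linarith
  set d : ℍ[ℝ] := (1 + l ^ 2)⁻¹ • (l • (b + c) + b * c + (l ^ 2) • (1 : ℍ[ℝ])) with hd
  have hdre : d.re = 0 := by
    simp only [hd, Quaternion.re_smul, Quaternion.re_add, Quaternion.re_mul,
      Quaternion.re_one, hb, hc, smul_eq_mul]
    field_simp
    linarith
  have hdI : d.imI = (1 + l ^ 2)⁻¹ * (l * (b.imI + c.imI) + (b.imJ * c.imK - b.imK * c.imJ)) := by
    simp only [hd, Quaternion.imI_smul, Quaternion.imI_add, Quaternion.imI_mul,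
      Quaternion.imI_one, hb, hc, smul_eq_mul]
    ring
  have hdJ : d.imJ = (1 + l ^ 2)⁻¹ * (l * (b.imJ + c.imJ) + (b.imK * c.imI - b.imI * c.imK)) := by
    simp only [hd, Quaternion.imJ_smul, Quaternion.imJ_add, Quaternion.imJ_mul,
      Quaternion.imJ_one, hb, hc, smul_eq_mul]
    ring
  have hdK : d.imK = (1 + l ^ 2)⁻¹ * (l * (b.imK + c.imK) + (b.imI * c.imJ - b.imJ * c.imI)) := by
    simp only [hd, Quaternion.imK_smul, Quaternion.imK_add, Quaternion.imK_mul,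
      Quaternion.imK_one, hb, hc, smul_eq_mul]
    ring
  refine ⟨d, hdre, ?_, ?_, ?_⟩
  · have hns : Quaternion.normSq d = 1 := by
      rw [Quaternion.normSq_def', hdre, hdI, hdJ, hdK]
      field_simp
      linear_combination (l^2 + c.imI^2 + c.imJ^2 + c.imK^2) * hb2 + (l^2 + 1) * hc2 + (l^2 - (b.imI * c.imI + b.imJ * c.imJ + b.imK * c.imK)) * hbc2
    have h2 := Quaternion.normSq_eq_norm_mul_self d
    rw [hns] at h2
    nlinarith [norm_nonneg d]
  · rw [Quaternion.inner_def]
    simp only [Quaternion.re_mul, Quaternion.re_star, Quaternion.imI_star,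
      Quaternion.imJ_star, Quaternion.imK_star, hb, hdre, hdI, hdJ, hdK]
    field_simp
    linear_combination l * hb2 + l * hbc2
  · rw [Quaternion.inner_def]
    simp only [Quaternion.re_mul, Quaternion.re_star, Quaternion.imI_star,
      Quaternion.imJ_star, Quaternion.imK_star, hc, hdre, hdI, hdJ, hdK]
    field_simp
    linear_combination l * hc2 + l * hbc2
end
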